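/- Define Ŝ(u,a) := 4π·(u − u²·√(π/a))². For all real M, r with 0 < 2M and 2M < r < 3M, setting u₀ := r·(1−√(1−2M/r)) and a₀ := 4πr², the following three inequalities hold: (i) the first derivative at u₀ of u ↦ Ŝ(u,a₀) is strictly positive; (ii) the second derivative at u₀ of u ↦ Ŝ(u,a₀) is strictly negative; (iii) the second derivative at a₀ of a ↦ Ŝ(u₀,a) is strictly negative. Hence the Bekenstein–Hawking entropy is monotone increasing in the internal energy and concave in internal energy and wall area on the stable parameter range. -/

import Mathlib

open Real

/-- Bekenstein–Hawking entropy expressed as a function of internal energy `u`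
and wall area `a`. -/
noncomputable def Shat (u a : ℝ) : ℝ := 4 * π * (u - u ^ 2 * Real.sqrt (π / a)) ^ 2

set_option maxHeartbeats 1600000 in
/-- On the stable range `2M < r < 3M`, the entropy `Ŝ(u,a)` is monotone increasing
in the internal energy and concave in internal energy and wall area:
`∂Ŝ/∂u > 0`, `∂²Ŝ/∂u² < 0` and `∂²Ŝ/∂a² < 0` at `u₀ = r(1−√(1−2M/r))`,
`a₀ = 4πr²`. -/
theorem bh_entropy_monotone_and_concave (M r : ℝ) (h0 : 0 < 2 * M)
    (h1 : 2 * M < r) (h2 : r < 3 * M) :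
    0 < deriv (fun u => Shat u (4 * π * r ^ 2)) (r * (1 - Real.sqrt (1 - 2 * M / r))) ∧
    deriv (deriv (fun u => Shat u (4 * π * r ^ 2)))
        (r * (1 - Real.sqrt (1 - 2 * M / r))) < 0 ∧
    deriv (deriv (fun a => Shat (r * (1 - Real.sqrt (1 - 2 * M / r))) a))
        (4 * π * r ^ 2) < 0 := by
  have hπ : (0:ℝ) < π := Real.pi_pos
  have hr : 0 < r := lt_trans h0 h1
  have hM : 0 < M := by linarith
  set s := Real.sqrt (1 - 2 * M / r) with hs
  have hx : 0 < 1 - 2 * M / r := by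
    rw [sub_pos, div_lt_one hr]; linarith
  have hs0 : 0 < s := Real.sqrt_pos.mpr hx
  have hs2 : s ^ 2 = 1 - 2 * M / r := Real.sq_sqrt hx.le
  have hs2' : s ^ 2 * r = r - 2 * M := by
    field_simp at hs2; linarith [hs2]
  have hs1 : s < 1 := by nlinarith [hs2', hM, hr, sq_nonneg (s - 1)]
  set u₀ := r * (1 - s) with hu₀
  set a₀ := 4 * π * r ^ 2 with ha₀
  have ha0 : 0 < a₀ := by rw [ha₀]; positivity
  have hu0 : 0 < u₀ := by
    have h1s : 0 < 1 - s := by linarith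
    rw [hu₀]; positivity
  have hC : Real.sqrt (π / a₀) = 1 / (2 * r) := by
    rw [show π / a₀ = (1 / (2 * r)) ^ 2 by rw [ha₀]; field_simp; ring]
    exact Real.sqrt_sq (by positivity)
  have hMeq : u₀ - u₀ ^ 2 * (1 / (2 * r)) = M := by
    rw [hu₀]
    field_simp
    nlinarith [hs2']
  have hsC : 1 - 2 * u₀ * (1 / (2 * r)) = s := by
    rw [hu₀]; field_simp; ring
  -- first derivative in u
  have key : ∀ u : ℝ, HasDerivAt (fun u => Shat u a₀)
      (8 * π * ((u - u ^ 2 * Real.sqrt (π / a₀)) * (1 - 2 * u * Real.sqrt (π / a₀)))) u := by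
    intro u
    have h : HasDerivAt (fun u : ℝ => u - u ^ 2 * Real.sqrt (π / a₀))
        (1 - 2 * u * Real.sqrt (π / a₀)) u := by
      simpa using (hasDerivAt_id u).fun_sub ((hasDerivAt_pow 2 u).mul_const (Real.sqrt (π / a₀)))
    have h2 := (h.fun_pow 2).const_mul (4 * π)
    refine h2.congr_deriv ?_
    push_cast
    ring
  have d1 : deriv (fun u => Shat u a₀)
      = fun u => 8 * π * ((u - u ^ 2 * Real.sqrt (π / a₀)) * (1 - 2 * u * Real.sqrt (π / a₀))) :=
    funext fun u => (key u).deriv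
  refine ⟨?_, ?_, ?_⟩
  · rw [(key u₀).deriv, hC, hMeq, hsC]
    positivity
  · -- second derivative in u
    rw [d1]
    have h1' : HasDerivAt (fun u : ℝ => u - u ^ 2 * Real.sqrt (π / a₀))
        (1 - 2 * u₀ * Real.sqrt (π / a₀)) u₀ := by
      simpa using (hasDerivAt_id u₀).fun_sub ((hasDerivAt_pow 2 u₀).mul_const (Real.sqrt (π / a₀)))
    have h2' : HasDerivAt (fun u : ℝ => 1 - 2 * u * Real.sqrt (π / a₀))
        (-(2 * Real.sqrt (π / a₀))) u₀ := by
      simpa using (hasDerivAt_const u₀ (1:ℝ)).fun_sub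
        (((hasDerivAt_id u₀).const_mul (2:ℝ)).mul_const (Real.sqrt (π / a₀)))
    have h3 := (h1'.fun_mul h2').const_mul (8 * π)
    rw [h3.deriv, hC, hMeq, hsC]
    have heq : s * s + M * -(2 * (1 / (2 * r))) = 1 - 3 * M / r := by
      field_simp
      nlinarith [hs2']
    rw [heq]
    have hneg : 1 - 3 * M / r < 0 := by
      rw [sub_neg, lt_div_iff₀ hr]; linarith
    nlinarith
  · -- second derivative in a
    have hw : ∀ a : ℝ, 0 < a → HasDerivAt (fun a => Real.sqrt (π / a))
        (1 / (2 * Real.sqrt (π / a)) * (π * (-(a ^ 2)⁻¹))) a := by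
      intro a ha
      have hin : HasDerivAt (fun a : ℝ => π / a) (π * (-(a ^ 2)⁻¹)) a := by
        simpa [div_eq_mul_inv] using (hasDerivAt_inv ha.ne').const_mul π
      have hpa : π / a ≠ 0 := by positivity
      exact (Real.hasDerivAt_sqrt hpa).comp a hin
    set φ : ℝ → ℝ := fun a =>
      4 * π ^ 2 * u₀ ^ 2 * ((u₀ - u₀ ^ 2 * Real.sqrt (π / a)) / (Real.sqrt (π / a) * a ^ 2))
      with hφ
    have hg : ∀ a : ℝ, 0 < a → HasDerivAt (fun a => Shat u₀ a) (φ a) a := by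
      intro a ha
      have h3 : HasDerivAt (fun a : ℝ => u₀ - u₀ ^ 2 * Real.sqrt (π / a))
          (0 - u₀ ^ 2 * (1 / (2 * Real.sqrt (π / a)) * (π * (-(a ^ 2)⁻¹)))) a :=
        (hasDerivAt_const a u₀).sub ((hw a ha).const_mul (u₀ ^ 2))
      have h4 := (h3.fun_pow 2).const_mul (4 * π)
      refine h4.congr_deriv ?_
      have hwa : Real.sqrt (π / a) ≠ 0 := by positivity
      simp only [hφ]
      push_cast
      field_simp
      ring
    have hEq : deriv (fun a => Shat u₀ a) =ᶠ[nhds a₀] φ := by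
      filter_upwards [isOpen_Ioi.mem_nhds (show a₀ ∈ Set.Ioi (0:ℝ) from ha0)] with a ha
      exact (hg a ha).deriv
    rw [hEq.deriv_eq]
    -- differentiate φ at a₀
    have hwa₀ : Real.sqrt (π / a₀) ≠ 0 := by rw [hC]; positivity
    have hN : HasDerivAt (fun a : ℝ => u₀ - u₀ ^ 2 * Real.sqrt (π / a))
        (0 - u₀ ^ 2 * (1 / (2 * Real.sqrt (π / a₀)) * (π * (-(a₀ ^ 2)⁻¹)))) a₀ :=
      (hasDerivAt_const a₀ u₀).sub ((hw a₀ ha0).const_mul (u₀ ^ 2))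
    have hD : HasDerivAt (fun a : ℝ => Real.sqrt (π / a) * a ^ 2)
        ((1 / (2 * Real.sqrt (π / a₀)) * (π * (-(a₀ ^ 2)⁻¹))) * a₀ ^ 2
          + Real.sqrt (π / a₀) * (2 * a₀)) a₀ := by
      have := (hw a₀ ha0).fun_mul (hasDerivAt_pow 2 a₀)
      simpa using this
    have hD0 : Real.sqrt (π / a₀) * a₀ ^ 2 ≠ 0 :=
      mul_ne_zero hwa₀ (by positivity)
    have hφd := ((hN.div hD hD0).const_mul (4 * π ^ 2 * u₀ ^ 2))
    have hφd' : HasDerivAt φ (4 * π ^ 2 * u₀ ^ 2 *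
        (((0 - u₀ ^ 2 * (1 / (2 * Real.sqrt (π / a₀)) * (π * (-(a₀ ^ 2)⁻¹)))) *
            (Real.sqrt (π / a₀) * a₀ ^ 2) -
          (u₀ - u₀ ^ 2 * Real.sqrt (π / a₀)) *
            ((1 / (2 * Real.sqrt (π / a₀)) * (π * (-(a₀ ^ 2)⁻¹))) * a₀ ^ 2
              + Real.sqrt (π / a₀) * (2 * a₀))) /
          (Real.sqrt (π / a₀) * a₀ ^ 2) ^ 2)) a₀ := hφd
    rw [hφd'.deriv, hC, hMeq]
    have hu6 : u₀ ^ 2 < 6 * M * r := by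
      rw [hu₀]
      nlinarith [hs2', hs0, hs1]
    rw [ha₀]
    have hr' : r ≠ 0 := hr.ne'
    rw [show (0 - u₀ ^ 2 * (1 / (2 * (1 / (2 * r))) * (π * (-((4 * π * r ^ 2) ^ 2)⁻¹)))) *
          (1 / (2 * r) * (4 * π * r ^ 2) ^ 2) -
        M * (1 / (2 * (1 / (2 * r))) * (π * (-((4 * π * r ^ 2) ^ 2)⁻¹)) * (4 * π * r ^ 2) ^ 2 +
          1 / (2 * r) * (2 * (4 * π * r ^ 2)))
        = π / 2 * (u₀ ^ 2 - 6 * M * r) from by field_simp; ring]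
    apply mul_neg_of_pos_of_neg (by positivity)
    apply div_neg_of_neg_of_pos (by nlinarith) (by positivity)
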